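/- arXiv:1107.1159 — 2 statements merged into one kernel-verified Lean document; each statement's English description precedes it below -/
import Mathlib

section
/- If a sequence of functions f_n : ℝ^d → ℝ satisfies ‖f_1‖_∞ ≤ A and ‖f_n‖_∞ ≤ A · Σ_{k=1}^{n-1} ((n-1)!/(k!(n-k)!)) ‖f_k‖_∞ ‖f_{n-k}‖_∞ for n ≥ 2, then ‖f_n‖_∞ ≤ A^{2n-1} · n! for all n ≥ 1. -/
/- Inductively, every term of the recursion is at most `(n-1)! A^(2n-2)`: the multinomial
weight `(n-1)!/(k!(n-k)!)` exactly cancels the factorials `k!` and `(n-k)!` of the two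
smaller bounds. Summing the `n-1` terms and using `(n-1)·(n-1)! ≤ n!` closes the induction. -/

open Finset Nat

lemma factorial_ratio_mul_pow_mul_factorial {A : ℝ} {n k : ℕ} (hk : 1 ≤ k) (hkn : k < n) :
    ((n - 1)! : ℝ) / (k ! * (n - k)!) * (A ^ (2 * k - 1) * k !) *
        (A ^ (2 * (n - k) - 1) * (n - k)!) = (n - 1)! * A ^ (2 * n - 2) := by
  have hexp : 2 * k - 1 + (2 * (n - k) - 1) = 2 * n - 2 := by omega
  rw [← hexp, pow_add]
  field_simp

lemma sub_one_mul_factorial_pred_le_factorial (n : ℕ) : ((n - 1 : ℕ) : ℝ) * (n - 1)! ≤ n ! := by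
  rcases n.eq_zero_or_pos with rfl | hn
  · simp
  · rw [← mul_factorial_pred hn.ne']
    push_cast
    gcongr
    exact_mod_cast Nat.sub_le n 1

theorem le_pow_mul_factorial_of_le_sum {a : ℕ → ℝ} {A : ℝ} (ha : ∀ n, 0 ≤ a n) (h1 : a 1 ≤ A)
    (hrec : ∀ n, 2 ≤ n →
      a n ≤ A * ∑ k ∈ Ico 1 n, ((n - 1)! : ℝ) / (k ! * (n - k)!) * a k * a (n - k)) :
    ∀ n, 1 ≤ n → a n ≤ A ^ (2 * n - 1) * n ! := by
  have hA : 0 ≤ A := (ha 1).trans h1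
  intro n
  induction n using Nat.strong_induction_on with
  | _ n ih =>
  intro hn
  rcases hn.eq_or_lt with rfl | hn
  · simpa using h1
  have hterm : ∀ k ∈ Ico 1 n,
      ((n - 1)! : ℝ) / (k ! * (n - k)!) * a k * a (n - k) ≤ (n - 1)! * A ^ (2 * n - 2) := by
    intro k hk
    obtain ⟨hk1, hkn⟩ := mem_Ico.mp hk
    rw [← factorial_ratio_mul_pow_mul_factorial hk1 hkn]
    gcongr
    · exact ha (n - k)
    · exact ih k hkn hk1
    · exact ih (n - k) (by omega) (by omega)
  calc a n ≤ A * ∑ k ∈ Ico 1 n, ((n - 1)! : ℝ) / (k ! * (n - k)!) * a k * a (n - k) :=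
        hrec n hn
    _ ≤ A * (((n - 1 : ℕ) : ℝ) * (n - 1)! * A ^ (2 * n - 2)) := by
        gcongr
        simpa [mul_assoc] using sum_le_card_nsmul _ _ _ hterm
    _ ≤ A * (n ! * A ^ (2 * n - 2)) := by
        gcongr
        exact sub_one_mul_factorial_pred_le_factorial n
    _ = A ^ (2 * n - 1) * n ! := by
        rw [show 2 * n - 1 = 2 * n - 2 + 1 by omega, pow_succ]
        ring

theorem stmt0_general (d : ℕ) (A : ℝ)
    (f : ℕ → BoundedContinuousFunction (EuclideanSpace ℝ (Fin d)) ℝ)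
    (h1 : ‖f 1‖ ≤ A)
    (hrec : ∀ n, 2 ≤ n →
      ‖f n‖ ≤ A * ∑ k ∈ Finset.Ico 1 n,
        ((Nat.factorial (n - 1) : ℝ) / (Nat.factorial k * Nat.factorial (n - k))) *
          ‖f k‖ * ‖f (n - k)‖) :
    ∀ n, 1 ≤ n → ‖f n‖ ≤ A ^ (2 * n - 1) * Nat.factorial n :=
  le_pow_mul_factorial_of_le_sum (fun n => norm_nonneg (f n)) h1 hrec

theorem stmt0 (d : ℕ) (A : ℝ) (hA : 1 ≤ A)
    (f : ℕ → BoundedContinuousFunction (EuclideanSpace ℝ (Fin d)) ℝ)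
    (h1 : ‖f 1‖ ≤ A)
    (hrec : ∀ n, 2 ≤ n →
      ‖f n‖ ≤ A * ∑ k ∈ Finset.Ico 1 n,
        ((Nat.factorial (n - 1) : ℝ) / (Nat.factorial k * Nat.factorial (n - k))) *
          ‖f k‖ * ‖f (n - k)‖) :
    ∀ n, 1 ≤ n → ‖f n‖ ≤ A ^ (2 * n - 1) * Nat.factorial n :=
  stmt0_general d A f h1 hrec
end

section
/- Define f_n : ℝ^d → ℝ recursively by f_1 = ψ and f_n = β Σ_{k=1}^{n-1} (n!/(k!(n-k)!)) I_n(v f_k f_{n-k}) for n ≥ 2, where I_n is a linear operator from C_exp to bounded continuous functions with ‖I_n(g)‖_C ≤ (A/(n-1))‖g‖_{C_exp}, ψ is bounded, and v is bounded with compact support. Then each f_n is a well-defined bounded continuous function, and there is a constant A' such that ‖f_n‖_C ≤ (A')^{2n-1} n! for all n. -/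
open Finset BoundedContinuousFunction

/-- The weighted supremum norm `‖g‖_{C_exp} = sup_x |g x| e^{|x|²}`. -/
noncomputable def CexpNorm {d : ℕ} (g : EuclideanSpace ℝ (Fin d) → ℝ) : ℝ :=
  ⨆ x, |g x| * Real.exp (‖x‖ ^ 2)

/-!
With `c = β A max(C_v, 0)`, the recursion gives
`‖f_n‖ ≤ c/(n-1) Σ_{0<k<n} binom(n, k) ‖f_k‖ ‖f_{n-k}‖`. If `‖f_k‖ ≤ B^{2k-1} k!` for `k < n`,
the binomial coefficient cancels the two factorials, so each of the `n - 1` summands is at most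
`B^{2n-2} n!` and `‖f_n‖ ≤ c B^{2n-2} n!`. Hence `B = max(‖ψ‖, c)` works by strong induction.
-/

open Nat in
theorem sum_choose_mul_pow_factorial_mul_pow_factorial (B : ℝ) {n : ℕ} (hn : 1 ≤ n) :
    ∑ k ∈ Ico 1 n, (n.choose k : ℝ) * (B ^ (2 * k - 1) * k ! * (B ^ (2 * (n - k) - 1) * (n - k)!))
      = (n - 1) * (B ^ (2 * n - 2) * n !) := by
  have hterm : ∀ k ∈ Ico 1 n, (n.choose k : ℝ) *
      (B ^ (2 * k - 1) * k ! * (B ^ (2 * (n - k) - 1) * (n - k)!)) = B ^ (2 * n - 2) * n ! := by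
    intro k hk
    obtain ⟨hk1, hkn⟩ := mem_Ico.mp hk
    have hpow : B ^ (2 * k - 1) * B ^ (2 * (n - k) - 1) = B ^ (2 * n - 2) := by
      rw [← pow_add]; congr 1; omega
    have hfact : (n.choose k : ℝ) * k ! * (n - k)! = n ! := by
      exact_mod_cast choose_mul_factorial_mul_factorial hkn.le
    rw [← hpow, ← hfact]; ring
  rw [sum_congr rfl hterm, sum_const, card_Ico, nsmul_eq_mul, Nat.cast_sub hn, Nat.cast_one]

open Nat in
theorem le_pow_mul_factorial_of_le_choose_convolution {a : ℕ → ℝ} {B c : ℝ}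
    (ha : ∀ n, 0 ≤ a n) (hc : 0 ≤ c) (hcB : c ≤ B) (ha1 : a 1 ≤ B)
    (hrec : ∀ n, 2 ≤ n → a n ≤ c / (n - 1) * ∑ k ∈ Ico 1 n, (n.choose k : ℝ) * (a k * a (n - k))) :
    ∀ n, 1 ≤ n → a n ≤ B ^ (2 * n - 1) * n ! := by
  have hB : 0 ≤ B := hc.trans hcB
  intro n
  induction n using Nat.strong_induction_on with
  | _ n ih =>
  intro hn
  obtain rfl | hn2 := hn.eq_or_lt
  · simpa using ha1
  have hn1 : (1 : ℝ) < n := by exact_mod_cast hn2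
  have hconv : ∑ k ∈ Ico 1 n, (n.choose k : ℝ) * (a k * a (n - k))
      ≤ ∑ k ∈ Ico 1 n,
          (n.choose k : ℝ) * (B ^ (2 * k - 1) * k ! * (B ^ (2 * (n - k) - 1) * (n - k)!)) := by
    refine sum_le_sum fun k hk => mul_le_mul_of_nonneg_left ?_ (Nat.cast_nonneg _)
    obtain ⟨hk1, hkn⟩ := mem_Ico.mp hk
    exact mul_le_mul (ih k hkn hk1) (ih (n - k) (by omega) (by omega)) (ha _) (by positivity)
  calc a n ≤ c / (n - 1) * ∑ k ∈ Ico 1 n, (n.choose k : ℝ) * (a k * a (n - k)) := hrec n hn2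
    _ ≤ c / (n - 1) * ((n - 1) * (B ^ (2 * n - 2) * n !)) := by
        rw [← sum_choose_mul_pow_factorial_mul_pow_factorial B hn]
        exact mul_le_mul_of_nonneg_left hconv (div_nonneg hc (by linarith))
    _ = c * (B ^ (2 * n - 2) * n !) := by field_simp [(sub_pos.mpr hn1).ne']
    _ ≤ B * (B ^ (2 * n - 2) * n !) := by gcongr
    _ = B ^ (2 * n - 1) * n ! := by rw [← mul_assoc, ← _root_.pow_succ']; congr 2; omega

section RecursiveBound

variable {d : ℕ} {v : EuclideanSpace ℝ (Fin d) →ᵇ ℝ} {Cv : ℝ}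

theorem norm_apply_mul_mul_le {T : (EuclideanSpace ℝ (Fin d) → ℝ) → EuclideanSpace ℝ (Fin d) →ᵇ ℝ}
    {K : ℝ} (hK : 0 ≤ K) (hT : ∀ g, ‖T g‖ ≤ K * CexpNorm g)
    (hCv : ∀ f g : EuclideanSpace ℝ (Fin d) →ᵇ ℝ,
      CexpNorm (fun x => v x * f x * g x) ≤ Cv * ‖f‖ * ‖g‖)
    (f g : EuclideanSpace ℝ (Fin d) →ᵇ ℝ) :
    ‖T (fun x => v x * f x * g x)‖ ≤ K * max Cv 0 * (‖f‖ * ‖g‖) :=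
  calc ‖T (fun x => v x * f x * g x)‖ ≤ K * CexpNorm (fun x => v x * f x * g x) := hT _
    _ ≤ K * (max Cv 0 * ‖f‖ * ‖g‖) := by
        gcongr
        exact (hCv f g).trans (by gcongr; exact le_max_left _ _)
    _ = K * max Cv 0 * (‖f‖ * ‖g‖) := by ring

open Nat in
theorem norm_le_choose_convolution {beta A : ℝ} (hbeta : 0 ≤ beta) (hA : 0 ≤ A)
    {I : (EuclideanSpace ℝ (Fin d) → ℝ) → EuclideanSpace ℝ (Fin d) →ᵇ ℝ}
    {f : ℕ → EuclideanSpace ℝ (Fin d) →ᵇ ℝ} {n : ℕ} (hn : 2 ≤ n)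
    (hCv : ∀ f g : EuclideanSpace ℝ (Fin d) →ᵇ ℝ,
      CexpNorm (fun x => v x * f x * g x) ≤ Cv * ‖f‖ * ‖g‖)
    (hI : ∀ g, ‖I g‖ ≤ A / (n - 1) * CexpNorm g)
    (hfn : f n = beta • ∑ k ∈ Ico 1 n,
        ((n ! : ℝ) / (k ! * (n - k)!)) • I (fun x => v x * f k x * f (n - k) x)) :
    ‖f n‖ ≤ beta * A * max Cv 0 / (n - 1) *
      ∑ k ∈ Ico 1 n, (n.choose k : ℝ) * (‖f k‖ * ‖f (n - k)‖) := by
  have hK : 0 ≤ A / ((n : ℝ) - 1) :=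
    div_nonneg hA (sub_nonneg.mpr (by exact_mod_cast (one_le_two.trans hn)))
  have hterm : ∀ k ∈ Ico 1 n, ‖((n ! : ℝ) / (k ! * (n - k)!)) •
      I (fun x => v x * f k x * f (n - k) x)‖
      ≤ A / (n - 1) * max Cv 0 * ((n.choose k : ℝ) * (‖f k‖ * ‖f (n - k)‖)) := by
    intro k hk
    rw [← Nat.cast_choose ℝ (mem_Ico.mp hk).2.le, norm_smul, Real.norm_natCast]
    calc (n.choose k : ℝ) * ‖I (fun x => v x * f k x * f (n - k) x)‖
        ≤ n.choose k * (A / (n - 1) * max Cv 0 * (‖f k‖ * ‖f (n - k)‖)) := by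
          gcongr; exact norm_apply_mul_mul_le hK hI hCv _ _
      _ = _ := by ring
  calc ‖f n‖ ≤ beta * ∑ k ∈ Ico 1 n, ‖((n ! : ℝ) / (k ! * (n - k)!)) •
        I (fun x => v x * f k x * f (n - k) x)‖ := by
        rw [hfn, norm_smul, Real.norm_of_nonneg hbeta]
        gcongr
        exact norm_sum_le _ _
    _ ≤ beta * ∑ k ∈ Ico 1 n,
        A / (n - 1) * max Cv 0 * ((n.choose k : ℝ) * (‖f k‖ * ‖f (n - k)‖)) := by
        gcongr with k hk; exact hterm k hk
    _ = _ := by rw [← mul_sum]; ring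

end RecursiveBound

theorem stmt17_general (d : ℕ) (beta A : ℝ) (hbeta : 0 < beta) (hA : 0 < A)
    (psi v : BoundedContinuousFunction (EuclideanSpace ℝ (Fin d)) ℝ)
    -- `v f g ∈ C_exp` with `‖v f g‖_{C_exp} ≤ C_v ‖f‖ ‖g‖` (a consequence of the
    -- compact support of `v`)
    (Cv : ℝ)
    (hCv : ∀ f g : BoundedContinuousFunction (EuclideanSpace ℝ (Fin d)) ℝ,
      CexpNorm (fun x => v x * f x * g x) ≤ Cv * ‖f‖ * ‖g‖)
    -- the operators `I_n`, bounded from `C_exp` to bounded continuous functions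
    (I : ℕ → (EuclideanSpace ℝ (Fin d) → ℝ) →
      BoundedContinuousFunction (EuclideanSpace ℝ (Fin d)) ℝ)
    (hI : ∀ n : ℕ, 2 ≤ n → ∀ g : EuclideanSpace ℝ (Fin d) → ℝ,
      ‖I n g‖ ≤ A / (n - 1) * CexpNorm g)
    -- the recursively defined sequence `f_n`
    (f : ℕ → BoundedContinuousFunction (EuclideanSpace ℝ (Fin d)) ℝ)
    (hf1 : f 1 = psi)
    (hfn : ∀ n : ℕ, 2 ≤ n →
      f n = beta • ∑ k ∈ Finset.Ico 1 n,
        ((Nat.factorial n : ℝ) / (Nat.factorial k * Nat.factorial (n - k))) •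
          I n (fun x => v x * f k x * f (n - k) x)) :
    ∃ A' : ℝ, ∀ n : ℕ, 1 ≤ n → ‖f n‖ ≤ A' ^ (2 * n - 1) * Nat.factorial n := by
  set c := beta * A * max Cv 0
  have hc : 0 ≤ c := by positivity
  exact ⟨max ‖psi‖ c, le_pow_mul_factorial_of_le_choose_convolution (fun n => norm_nonneg (f n))
    hc (le_max_right _ _) (hf1 ▸ le_max_left _ _) fun n hn =>
      norm_le_choose_convolution hbeta.le hA.le hn hCv (hI n hn) (hfn n hn)⟩

theorem stmt17 (d : ℕ) (beta A : ℝ) (hbeta : 0 < beta) (hA : 0 < A)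
    (psi v : BoundedContinuousFunction (EuclideanSpace ℝ (Fin d)) ℝ)
    (hv : HasCompactSupport (v : EuclideanSpace ℝ (Fin d) → ℝ))
    -- `v f g ∈ C_exp` with `‖v f g‖_{C_exp} ≤ C_v ‖f‖ ‖g‖` (a consequence of the
    -- compact support of `v`)
    (Cv : ℝ)
    (hCv : ∀ f g : BoundedContinuousFunction (EuclideanSpace ℝ (Fin d)) ℝ,
      CexpNorm (fun x => v x * f x * g x) ≤ Cv * ‖f‖ * ‖g‖)
    -- the operators `I_n`, bounded from `C_exp` to bounded continuous functions
    (I : ℕ → (EuclideanSpace ℝ (Fin d) → ℝ) →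
      BoundedContinuousFunction (EuclideanSpace ℝ (Fin d)) ℝ)
    (hI : ∀ n : ℕ, 2 ≤ n → ∀ g : EuclideanSpace ℝ (Fin d) → ℝ,
      ‖I n g‖ ≤ A / (n - 1) * CexpNorm g)
    -- the recursively defined sequence `f_n`
    (f : ℕ → BoundedContinuousFunction (EuclideanSpace ℝ (Fin d)) ℝ)
    (hf1 : f 1 = psi)
    (hfn : ∀ n : ℕ, 2 ≤ n →
      f n = beta • ∑ k ∈ Finset.Ico 1 n,
        ((Nat.factorial n : ℝ) / (Nat.factorial k * Nat.factorial (n - k))) •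
          I n (fun x => v x * f k x * f (n - k) x)) :
    ∃ A' : ℝ, ∀ n : ℕ, 1 ≤ n → ‖f n‖ ≤ A' ^ (2 * n - 1) * Nat.factorial n :=
  stmt17_general d beta A hbeta hA psi v Cv hCv I hI f hf1 hfn
end
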